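/- Let W be a Coxeter group, J ⊆ S, s a simple reflection, v ∈ W and τ ∈ W/W_J such that v < sv, svW_J ≤ τ, and sτ ≤ τ. Set y = up(sv, τ) and w = up(v, τ). Then either y = w, or y = sw > w; moreover the latter can occur only if sτ = τ. -/

import Mathlib

namespace KMChev

open CoxeterSystem

variable {B W : Type*} [Group W] {M : CoxeterMatrix B}

/-- Bruhat covering relation: `w = v t` for a reflection `t` and `ℓ(w) = ℓ(v) + 1`. -/
def BruhatCov (cs : CoxeterSystem M W) (v w : W) : Prop :=
  (∃ t : W, cs.IsReflection t ∧ w = v * t) ∧ cs.length w = cs.length v + 1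

/-- The (strong) Bruhat order on a Coxeter group. -/
def BruhatLE (cs : CoxeterSystem M W) : W → W → Prop :=
  Relation.ReflTransGen (BruhatCov cs)

/-- Strict Bruhat order. -/
def BruhatLT (cs : CoxeterSystem M W) (v w : W) : Prop :=
  BruhatLE cs v w ∧ v ≠ w

/-- The standard parabolic subgroup `W_J` generated by the simple reflections in `J`. -/
def WJ (cs : CoxeterSystem M W) (J : Set B) : Subgroup W :=
  Subgroup.closure (cs.simple '' J)

/-- The set `W^J` of minimal length coset representatives:
`w` with `ℓ(w s_j) > ℓ(w)` for all `j ∈ J`. -/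
def MinRep (cs : CoxeterSystem M W) (J : Set B) : Set W :=
  {w : W | ∀ j ∈ J, cs.length w < cs.length (w * cs.simple j)}

/-- The Bruhat order on `W/W_J`, transported from `W^J` via `w ↦ w W_J`. -/
def CosetLE (cs : CoxeterSystem M W) (J : Set B) (σ τ : W ⧸ WJ cs J) : Prop :=
  ∃ v w : W, v ∈ MinRep cs J ∧ w ∈ MinRep cs J ∧
    (QuotientGroup.mk v : W ⧸ WJ cs J) = σ ∧ (QuotientGroup.mk w : W ⧸ WJ cs J) = τ ∧
    BruhatLE cs v w

/-- Strict Bruhat order on `W/W_J`. -/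
def CosetLT (cs : CoxeterSystem M W) (J : Set B) (σ τ : W ⧸ WJ cs J) : Prop :=
  CosetLE cs J σ τ ∧ σ ≠ τ

end KMChev

/-!
Since `v ≤ s v ≤ y`, minimality of `w` gives `w ≤ y`; so if `s v ≤ w` then `y = w`.
Otherwise the lifting property of the Bruhat order forces `w < s w` and `s v ≤ s w`. Lengths add
along `u W_J` for the minimal representative `u` of `τ`, so `s u < u` would give `s w < w`;
hence `u < s u`. If `s τ ≠ τ`, then `s u` is the minimal representative of `s τ` and is longer
than `u`, contradicting `s τ ≤ τ`. So `s w ∈ τ`, whence `y ≤ s w`, and `w < y` forces `y = s w`.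

The needed facts about inversions come from Tits' representation of `W` on pairs
(reflection, sign): if `t` is a right inversion of `u * v`, then `t` is a right inversion of `v`
or `v * t * v⁻¹` is a right inversion of `u`.
-/

namespace KMChev

open CoxeterSystem

variable {B W : Type*} [Group W] {M : CoxeterMatrix B} (cs : CoxeterSystem M W)

local prefix:100 "s" => cs.simple
local prefix:100 "π" => cs.wordProd
local prefix:100 "ℓ" => cs.length
local prefix:100 "ris" => cs.rightInvSeq

section ReflectionRepresentation

open Classical

theorem simple_mul_mul_simple_eq_iff (i : B) (x y : W) :
    s i * x * s i = y ↔ x = s i * y * s i := by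
  rw [← cs.inv_simple i, mul_assoc, inv_mul_eq_iff_eq_mul, ← eq_mul_inv_iff_mul_eq, inv_inv]
  simp only [cs.inv_simple]

/-- The action of `s i` in Tits' representation on (reflection, sign) pairs. -/
noncomputable def reflPerm (i : B) : Equiv.Perm (W × ZMod 2) :=
  Function.Involutive.toPerm (fun p ↦ (s i * p.1 * s i, p.2 + if p.1 = s i then 1 else 0))
    (by
      rintro ⟨t, e⟩
      simp only [simple_mul_mul_simple_eq_iff, Prod.mk.injEq, cs.simple_mul_simple_cancel_right]
      refine ⟨by simp, ?_⟩
      split_ifs <;> ring_nf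
      simp [show (2 : ZMod 2) = 0 from rfl])

theorem reflPerm_apply (i : B) (p : W × ZMod 2) :
    reflPerm cs i p = (s i * p.1 * s i, p.2 + if p.1 = s i then 1 else 0) := rfl

theorem simple_mul_inv_pow (i j : B) (n : ℕ) :
    s j * ((s j * s i) ^ n)⁻¹ = (s j * s i) ^ n * s j := by
  have h := conj_pow (a := s j) (b := (s j * s i)⁻¹) (i := n)
  rw [cs.inv_simple, show s j * (s j * s i)⁻¹ * s j = s j * s i by simp [mul_assoc],
    inv_pow] at h
  conv_rhs => rw [h]
  simp [mul_assoc]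

theorem reflPerm_mul_reflPerm_pow_apply (i j : B) (k : ℕ) (p : W × ZMod 2) :
    ((reflPerm cs i * reflPerm cs j) ^ k) p =
      (((s j * s i) ^ k)⁻¹ * p.1 * (s j * s i) ^ k,
        p.2 + ∑ d ∈ Finset.range (2 * k), if p.1 = (s j * s i) ^ d * s j then 1 else 0) := by
  have hconj (n : ℕ) (x z : W) : ((s j * s i) ^ n)⁻¹ * x * (s j * s i) ^ n = z * s j ↔
      x = (s j * s i) ^ n * z * (s j * s i) ^ n * s j := by
    rw [mul_assoc, inv_mul_eq_iff_eq_mul, ← eq_mul_inv_iff_mul_eq]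
    simp only [mul_assoc, simple_mul_inv_pow]
  induction k generalizing p with
  | zero => simp
  | succ k ih =>
    rw [pow_succ', Equiv.Perm.mul_apply, Equiv.Perm.mul_apply, ih, reflPerm_apply, reflPerm_apply]
    ext
    · simp [pow_succ, mul_assoc]
    · have h1 : ((s j * s i) ^ k)⁻¹ * p.1 * (s j * s i) ^ k = s j ↔
          p.1 = (s j * s i) ^ (2 * k) * s j := by
        simpa [two_mul, pow_add] using hconj k p.1 1
      have h2 : ((s j * s i) ^ k)⁻¹ * p.1 * (s j * s i) ^ k = s j * s i * s j ↔
          p.1 = (s j * s i) ^ (2 * k + 1) * s j := by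
        rw [hconj, ← pow_succ, ← pow_add, two_mul, Nat.add_right_comm]
      simp only [simple_mul_mul_simple_eq_iff, h1, h2, Nat.mul_succ, Finset.sum_range_succ,
        add_assoc]

theorem reflPerm_isLiftable : M.IsLiftable (reflPerm cs) := by
  intro i j
  ext p
  · simp [reflPerm_mul_reflPerm_pow_apply]
  · have hsum : ∑ d ∈ Finset.range (2 * M i j),
        (if p.1 = (s j * s i) ^ d * s j then 1 else 0 : ZMod 2) = 0 := by
      simp only [two_mul, Finset.sum_range_add, pow_add, cs.simple_mul_simple_pow', one_mul]
      exact CharTwo.add_self_eq_zero _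
    simp [reflPerm_mul_reflPerm_pow_apply, hsum]

noncomputable def reflRep : W →* Equiv.Perm (W × ZMod 2) :=
  cs.lift ⟨reflPerm cs, reflPerm_isLiftable cs⟩

theorem reflRep_simple (i : B) : reflRep cs (s i) = reflPerm cs i :=
  cs.lift_apply_simple (reflPerm_isLiftable cs) i

theorem reflRep_wordProd_apply (ω : List B) (p : W × ZMod 2) :
    reflRep cs (π ω) p = (π ω * p.1 * (π ω)⁻¹, p.2 + ((ris ω).count p.1 : ZMod 2)) := by
  induction ω generalizing p with
  | nil => simp [reflRep]
  | cons i ω ih =>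
    rw [cs.wordProd_cons, map_mul, Equiv.Perm.mul_apply, ih, reflRep_simple, reflPerm_apply]
    have hcond : π ω * p.1 * (π ω)⁻¹ = s i ↔ (π ω)⁻¹ * s i * π ω = p.1 := by
      constructor <;> intro h <;> rw [← h] <;> group
    ext
    · simp [mul_assoc]
    · simp only [rightInvSeq, List.count_cons, hcond, beq_iff_eq]
      push_cast
      ring

noncomputable def reflParity (w t : W) : ZMod 2 := (reflRep cs w (t, 0)).2

theorem reflParity_wordProd (ω : List B) (t : W) :
    reflParity cs (π ω) t = ((ris ω).count t : ZMod 2) := by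
  simp [reflParity, reflRep_wordProd_apply]

theorem reflRep_apply (w : W) (p : W × ZMod 2) :
    reflRep cs w p = (w * p.1 * w⁻¹, p.2 + reflParity cs w p.1) := by
  obtain ⟨ω, rfl⟩ := cs.wordProd_surjective w
  rw [reflRep_wordProd_apply, reflParity_wordProd]

theorem reflParity_mul (u v t : W) :
    reflParity cs (u * v) t = reflParity cs v t + reflParity cs u (v * t * v⁻¹) := by
  change (reflRep cs (u * v) (t, 0)).2 = _
  rw [map_mul, Equiv.Perm.mul_apply, reflRep_apply cs v, reflRep_apply cs u, zero_add]

theorem reflParity_one (t : W) : reflParity cs 1 t = 0 := by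
  simp [reflParity]

theorem reflParity_inv (w t : W) : reflParity cs w⁻¹ t = reflParity cs w (w⁻¹ * t * w) := by
  have h := reflParity_mul cs w w⁻¹ t
  rw [mul_inv_cancel, reflParity_one, inv_inv] at h
  exact CharTwo.add_eq_zero.mp h.symm

theorem reflParity_simple_self (i : B) : reflParity cs (s i) (s i) = 1 := by
  simpa using reflParity_wordProd cs [i] (s i)

theorem reflParity_self {t : W} (ht : cs.IsReflection t) : reflParity cs t t = 1 := by
  obtain ⟨x, i, rfl⟩ := ht
  have hconj : x⁻¹ * (x * s i * x⁻¹) * x = s i := by group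
  rw [reflParity_mul, reflParity_inv, inv_inv, hconj, reflParity_mul, reflParity_simple_self,
    cs.inv_simple, cs.simple_mul_simple_cancel_right, add_left_comm, CharTwo.add_self_eq_zero,
    add_zero]

theorem reflParity_eq_zero_of_not_isRightInversion {w t : W}
    (h : ¬ cs.IsRightInversion w t) : reflParity cs w t = 0 := by
  obtain ⟨ω, hω, rfl⟩ := cs.exists_isReduced w
  have ht : t ∉ ris ω := fun hmem ↦ h (cs.isRightInversion_of_mem_rightInvSeq hω hmem)
  simp [reflParity_wordProd, List.count_eq_zero_of_not_mem ht]

theorem isRightInversion_iff_reflParity_eq_one {w t : W} (ht : cs.IsReflection t) :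
    cs.IsRightInversion w t ↔ reflParity cs w t = 1 := by
  constructor
  · intro h
    have hwt : ¬ cs.IsRightInversion (w * t) t := by
      rintro ⟨-, h'⟩
      rw [mul_assoc, ht.mul_self, mul_one] at h'
      exact lt_asymm h.2 h'
    calc reflParity cs w t = reflParity cs (w * t * t) t := by rw [mul_assoc, ht.mul_self, mul_one]
      _ = 1 := by
        rw [reflParity_mul, reflParity_self cs ht, ht.mul_self, one_mul, ht.inv,
          reflParity_eq_zero_of_not_isRightInversion cs hwt, add_zero]
  · intro h
    by_contra h'
    rw [reflParity_eq_zero_of_not_isRightInversion cs h'] at h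
    exact zero_ne_one h

theorem mem_rightInvSeq_of_isRightInversion {ω : List B} {t : W}
    (ht : cs.IsRightInversion (π ω) t) : t ∈ ris ω := by
  have h := (isRightInversion_iff_reflParity_eq_one cs ht.1).mp ht
  rw [reflParity_wordProd] at h
  by_contra hmem
  rw [List.count_eq_zero_of_not_mem hmem, Nat.cast_zero] at h
  exact zero_ne_one h

/-- The strong exchange property. -/
theorem exists_wordProd_mul_eq_eraseIdx {ω : List B} {t : W}
    (ht : cs.IsRightInversion (π ω) t) : ∃ j < ω.length, π ω * t = π (ω.eraseIdx j) := by
  obtain ⟨j, hj, rfl⟩ := List.mem_iff_getElem.mp (mem_rightInvSeq_of_isRightInversion cs ht)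
  rw [length_rightInvSeq] at hj
  refine ⟨j, hj, ?_⟩
  rw [← cs.wordProd_mul_getD_rightInvSeq, List.getD_eq_getElem]

theorem isRightInversion_or_of_isRightInversion_mul {u v t : W}
    (h : cs.IsRightInversion (u * v) t) :
    cs.IsRightInversion v t ∨ cs.IsRightInversion u (v * t * v⁻¹) := by
  have ht := h.1
  rw [isRightInversion_iff_reflParity_eq_one cs ht, reflParity_mul] at h
  rw [isRightInversion_iff_reflParity_eq_one cs ht,
    isRightInversion_iff_reflParity_eq_one cs (ht.conj v)]
  generalize reflParity cs v t = a, reflParity cs u (v * t * v⁻¹) = b at h ⊢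
  revert a b
  decide

theorem simple_mul_mul_eq_of_isRightInversion {i : B} {u t : W}
    (h : cs.IsRightInversion (s i * u) t) (hu : ¬ cs.IsRightInversion u t) : s i * u * t = u := by
  obtain h' | ⟨-, h'⟩ := isRightInversion_or_of_isRightInversion_mul cs h
  · exact absurd h' hu
  · rw [cs.length_simple, Nat.lt_one_iff, cs.length_eq_zero_iff] at h'
    calc s i * u * t = s i * (u * t * u⁻¹) * u := by group
      _ = u := by rw [h', one_mul]

end ReflectionRepresentation

section BruhatOrder

variable {cs}

theorem BruhatLE.length_le {v w : W} (h : BruhatLE cs v w) : ℓ v ≤ ℓ w := by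
  induction h with
  | refl => exact le_rfl
  | tail _ hcov ih => rw [hcov.2]; omega

theorem BruhatLE.length_lt {v w : W} (h : BruhatLE cs v w) (hne : v ≠ w) : ℓ v < ℓ w := by
  obtain rfl | ⟨u, hvu, hcov⟩ := Relation.ReflTransGen.cases_tail h
  · exact absurd rfl hne
  · rw [hcov.2]; exact Nat.lt_succ_of_le (BruhatLE.length_le hvu)

theorem BruhatLE.eq_of_length_le {v w : W} (h : BruhatLE cs v w) (hl : ℓ w ≤ ℓ v) :
    v = w := by
  by_contra hne
  exact absurd (h.length_lt hne) (not_lt.mpr hl)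

theorem bruhatCov_simple_mul {v : W} {i : B} (h : ℓ (s i * v) = ℓ v + 1) :
    BruhatCov cs v (s i * v) :=
  ⟨⟨v⁻¹ * s i * v, ⟨v⁻¹, i, by rw [inv_inv]⟩, by group⟩, h⟩

theorem bruhatLE_simple_mul {v : W} {i : B} (h : ℓ v < ℓ (s i * v)) :
    BruhatLE cs v (s i * v) :=
  .single (bruhatCov_simple_mul ((cs.length_simple_mul v i).resolve_right (by omega)))

theorem BruhatCov.simple_mul {u w : W} {i : B} (h : BruhatCov cs u w)
    (hl : ℓ (s i * w) = ℓ (s i * u) + 1) : BruhatCov cs (s i * u) (s i * w) := by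
  obtain ⟨⟨t, ht, rfl⟩, -⟩ := h
  exact ⟨⟨t, ht, (mul_assoc _ _ _).symm⟩, hl⟩

theorem BruhatCov.simple_mul_eq {u w : W} {i : B} (h : BruhatCov cs u w)
    (hw : ℓ (s i * w) < ℓ w) (hu : ℓ u < ℓ (s i * u)) : s i * u = w := by
  obtain ⟨⟨t, ht, rfl⟩, hl⟩ := h
  have hsu : ℓ (s i * u) = ℓ u + 1 := (cs.length_simple_mul u i).resolve_right (by omega)
  have key : s i * u * t = u := by
    refine simple_mul_mul_eq_of_isRightInversion cs ⟨ht, ?_⟩ fun h ↦ ?_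
    · rw [mul_assoc]; omega
    · have := h.2; omega
  calc s i * u = s i * u * t * t := by rw [mul_assoc, ht.mul_self, mul_one]
    _ = u * t := by rw [key]

/-- The lifting property of the Bruhat order (Deodhar's property Z). -/
theorem BruhatLE.lifting {v w : W} {i : B} (hv : ℓ v < ℓ (s i * v)) (hvw : BruhatLE cs v w) :
    (ℓ (s i * w) < ℓ w → BruhatLE cs (s i * v) w ∧ BruhatLE cs v (s i * w)) ∧
    (ℓ w < ℓ (s i * w) → BruhatLE cs (s i * v) (s i * w)) := by
  induction hvw with
  | refl => exact ⟨fun h ↦ absurd hv (lt_asymm h), fun _ ↦ .refl⟩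
  | @tail u w hvu huw ih =>
    have hlw := huw.2
    rcases cs.length_simple_mul u i with hu | hu <;> rcases cs.length_simple_mul w i with hw | hw
    · exact ⟨fun h ↦ by omega, fun _ ↦ (ih.2 (by omega)).tail (huw.simple_mul (by omega))⟩
    · have hsuw : s i * u = w := huw.simple_mul_eq (by omega) (by omega)
      refine ⟨fun _ ↦ ⟨hsuw ▸ ih.2 (by omega), ?_⟩, fun h ↦ by omega⟩
      rwa [← hsuw, cs.simple_mul_simple_cancel_left]
    · exact ⟨fun h ↦ by omega,
        fun _ ↦ ((ih.1 (by omega)).1.tail huw).trans (bruhatLE_simple_mul (i := i) (by omega))⟩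
    · obtain ⟨h1, h2⟩ := ih.1 (by omega)
      exact ⟨fun _ ↦ ⟨h1.tail huw, h2.tail (huw.simple_mul (by omega))⟩,
        fun h ↦ by omega⟩

end BruhatOrder

section Parabolic

variable {cs} {J : Set B}

theorem simple_mem_WJ {j : B} (hj : j ∈ J) : s j ∈ WJ cs J :=
  Subgroup.subset_closure ⟨j, hj, rfl⟩

theorem exists_reduced_word_mul_simple {ω : List B} (hωJ : ∀ b ∈ ω, b ∈ J)
    (hω : cs.IsReduced ω) {j : B} (hj : j ∈ J) :
    ∃ ω' : List B, (∀ b ∈ ω', b ∈ J) ∧ cs.IsReduced ω' ∧ π ω' = π ω * s j := by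
  rcases cs.length_mul_simple (π ω) j with h | h
  · refine ⟨ω ++ [j], by simpa [or_imp, forall_and] using ⟨hωJ, hj⟩, ?_,
      by simp [wordProd_append]⟩
    simp [CoxeterSystem.IsReduced, wordProd_append, h, hω.eq]
  · obtain ⟨k, hk, heq⟩ :=
      exists_wordProd_mul_eq_eraseIdx cs (ω := ω) ⟨cs.isReflection_simple j, by omega⟩
    refine ⟨ω.eraseIdx k, fun b hb ↦ hωJ b (List.mem_of_mem_eraseIdx hb), ?_, heq.symm⟩
    have := List.length_eraseIdx_add_one hk
    rw [CoxeterSystem.IsReduced, ← heq]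
    rw [hω.eq] at h
    omega

theorem exists_reduced_word_of_mem_WJ {c : W} (hc : c ∈ WJ cs J) :
    ∃ ω : List B, (∀ b ∈ ω, b ∈ J) ∧ cs.IsReduced ω ∧ π ω = c := by
  induction hc using Subgroup.closure_induction_right with
  | one => exact ⟨[], by simp, by simp [CoxeterSystem.IsReduced], rfl⟩
  | mul_right c _ x hx ih =>
    obtain ⟨j, hj, rfl⟩ := hx
    obtain ⟨ω, hωJ, hω, rfl⟩ := ih
    exact exists_reduced_word_mul_simple hωJ hω hj
  | mul_inv_cancel c _ x hx ih =>
    obtain ⟨j, hj, rfl⟩ := hx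
    obtain ⟨ω, hωJ, hω, rfl⟩ := ih
    rw [cs.inv_simple]
    exact exists_reduced_word_mul_simple hωJ hω hj

theorem exists_rightDescent_of_mem_WJ {c : W} (hc : c ∈ WJ cs J) (hc1 : c ≠ 1) :
    ∃ j ∈ J, ℓ (c * s j) < ℓ c := by
  obtain ⟨ω, hωJ, hω, rfl⟩ := exists_reduced_word_of_mem_WJ hc
  obtain ⟨ω', j, rfl⟩ := ω.eq_nil_or_concat'.resolve_left (by rintro rfl; exact hc1 rfl)
  refine ⟨j, hωJ j (by simp), ?_⟩
  have := cs.length_wordProd_le ω'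
  rw [hω.eq, wordProd_append, wordProd_singleton, cs.simple_mul_simple_cancel_right]
  simp only [List.length_append, List.length_singleton]
  omega

theorem length_mul_of_forall_length_le {u : W} (hu : ∀ c ∈ WJ cs J, ℓ u ≤ ℓ (u * c))
    {c : W} (hc : c ∈ WJ cs J) : ℓ (u * c) = ℓ u + ℓ c := by
  have step : ∀ c ∈ WJ cs J, ∀ j ∈ J, ℓ (u * c) = ℓ u + ℓ c →
      ℓ (u * (c * s j)) = ℓ u + ℓ (c * s j) := by
    intro c hc j hj ih
    rw [← mul_assoc]
    rcases cs.length_mul_simple c j with h | h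
    · by_contra hne
      have hinv : cs.IsRightInversion (u * c) (s j) :=
        ⟨cs.isReflection_simple j, by have := cs.length_mul_simple (u * c) j; omega⟩
      -- `s j` is not a right inversion of `c`, so `u` has a right inversion in `W_J`.
      obtain h' | h' := isRightInversion_or_of_isRightInversion_mul cs hinv
      · have := h'.2; omega
      · have hconj : c * s j * c⁻¹ ∈ WJ cs J :=
          mul_mem (mul_mem hc (simple_mem_WJ hj)) (inv_mem hc)
        exact absurd h'.2 (not_lt.mpr (hu _ hconj))
    · have h₁ := cs.length_mul_le u (c * s j)
      have h₂ := cs.length_mul_simple (u * c) j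
      rw [← mul_assoc] at h₁
      omega
  induction hc using Subgroup.closure_induction_right with
  | one => simp
  | mul_right c hc x hx ih =>
    obtain ⟨j, hj, rfl⟩ := hx
    exact step c hc j hj ih
  | mul_inv_cancel c hc x hx ih =>
    obtain ⟨j, hj, rfl⟩ := hx
    rw [cs.inv_simple]
    exact step c hc j hj ih

theorem exists_forall_length_le_mul (x : W) :
    ∃ u : W, (u : W ⧸ WJ cs J) = x ∧ ∀ c ∈ WJ cs J, ℓ u ≤ ℓ (u * c) := by
  obtain ⟨u, hu, hmin⟩ :=
    (measure cs.length).wf.has_min {z : W | (z : W ⧸ WJ cs J) = x} ⟨x, rfl⟩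
  refine ⟨u, hu, fun c hc ↦ not_lt.mp (hmin (u * c) ?_)⟩
  exact (QuotientGroup.mk_mul_of_mem u hc).trans hu

theorem mem_MinRep_iff {x : W} :
    x ∈ MinRep cs J ↔ ∀ c ∈ WJ cs J, ℓ x ≤ ℓ (x * c) := by
  constructor
  · intro hx
    obtain ⟨u, hux, hu⟩ := exists_forall_length_le_mul (cs := cs) (J := J) x
    have hc : u⁻¹ * x ∈ WJ cs J := QuotientGroup.eq.mp hux
    obtain rfl : u = x := by
      by_contra hne
      obtain ⟨j, hj, hdesc⟩ := exists_rightDescent_of_mem_WJ hc (by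
        rwa [Ne, inv_mul_eq_one])
      have h₁ := length_mul_of_forall_length_le hu hc
      have h₂ := cs.length_mul_le u (u⁻¹ * x * s j)
      have h₃ := hx j hj
      rw [mul_inv_cancel_left] at h₁
      rw [← mul_assoc, mul_inv_cancel_left] at h₂
      omega
    exact hu
  · intro hx j hj
    have := hx (s j) (simple_mem_WJ hj)
    have := cs.length_mul_simple_ne x j
    omega

theorem exists_mem_MinRep (τ : W ⧸ WJ cs J) :
    ∃ u ∈ MinRep cs J, (u : W ⧸ WJ cs J) = τ := by
  obtain ⟨x, rfl⟩ := QuotientGroup.mk_surjective τ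
  obtain ⟨u, hux, hu⟩ := exists_forall_length_le_mul (cs := cs) (J := J) x
  exact ⟨u, mem_MinRep_iff.mpr hu, hux⟩

theorem length_mul_of_mem_MinRep {x c : W} (hx : x ∈ MinRep cs J) (hc : c ∈ WJ cs J) :
    ℓ (x * c) = ℓ x + ℓ c :=
  length_mul_of_forall_length_le (mem_MinRep_iff.mp hx) hc

theorem eq_of_mem_MinRep {x y : W} (hx : x ∈ MinRep cs J) (hy : y ∈ MinRep cs J)
    (hxy : (x : W ⧸ WJ cs J) = y) : x = y := by
  have hc : x⁻¹ * y ∈ WJ cs J := QuotientGroup.eq.mp hxy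
  have h₁ := length_mul_of_mem_MinRep hx hc
  have h₂ := length_mul_of_mem_MinRep hy (inv_mem hc)
  rw [mul_inv_cancel_left] at h₁
  rw [mul_inv_rev, inv_inv, mul_inv_cancel_left, ← cs.length_inv (y⁻¹ * x), mul_inv_rev,
    inv_inv] at h₂
  have := cs.length_eq_zero_iff.mp (by omega : ℓ (x⁻¹ * y) = 0)
  rwa [inv_mul_eq_one] at this

theorem length_simple_mul_lt_of_mem_MinRep {u x : W} {i : B} (hu : u ∈ MinRep cs J)
    (hsu : ℓ (s i * u) < ℓ u) (hx : (x : W ⧸ WJ cs J) = u) : ℓ (s i * x) < ℓ x := by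
  have hc : u⁻¹ * x ∈ WJ cs J := QuotientGroup.eq.mp hx.symm
  have h₁ := length_mul_of_mem_MinRep hu hc
  have h₂ := cs.length_mul_le (s i * u) (u⁻¹ * x)
  rw [mul_inv_cancel_left] at h₁
  rw [mul_assoc, mul_inv_cancel_left] at h₂
  omega

theorem simple_mul_mem_MinRep {u : W} {i : B} (hu : u ∈ MinRep cs J)
    (hne : ((s i * u : W) : W ⧸ WJ cs J) ≠ u) :
    s i * u ∈ MinRep cs J := by
  intro j hj
  by_contra h
  have hdesc : ℓ (s i * u * s j) < ℓ (s i * u) := by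
    have := cs.length_mul_simple_ne (s i * u) j
    omega
  have hexch := simple_mul_mul_eq_of_isRightInversion cs ⟨cs.isReflection_simple j, hdesc⟩
    fun h' ↦ absurd h'.2 (not_lt.mpr (hu j hj).le)
  apply hne
  calc ((s i * u : W) : W ⧸ WJ cs J) = (s i * u * s j : W) :=
        (QuotientGroup.mk_mul_of_mem _ (simple_mem_WJ hj)).symm
    _ = u := by rw [hexch]

theorem smul_eq_of_cosetLE {τ : W ⧸ WJ cs J} {i : B} (hτ : CosetLE cs J (s i • τ) τ) {w : W}
    (hw : (w : W ⧸ WJ cs J) = τ) (hsw : ℓ w < ℓ (s i * w)) : s i • τ = τ := by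
  obtain ⟨a, b, ha, hb, haτ, hbτ, hab⟩ := hτ
  obtain ⟨u, hu, rfl⟩ := exists_mem_MinRep τ
  by_contra hne
  have hasc : ℓ u < ℓ (s i * u) := by
    by_contra h
    have hdesc := lt_of_le_of_ne (not_lt.mp h) (cs.length_simple_mul_ne u i)
    have := length_simple_mul_lt_of_mem_MinRep hu hdesc hw
    omega
  have hsu := simple_mul_mem_MinRep hu hne
  obtain rfl : a = s i * u := eq_of_mem_MinRep ha hsu haτ
  obtain rfl : b = u := eq_of_mem_MinRep hb hu hbτ
  exact absurd hab.length_le (not_le.mpr hasc)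

end Parabolic

end KMChev

namespace KMChev

theorem lift_right_general {B W : Type*} [Group W] {M : CoxeterMatrix B}
    (cs : CoxeterSystem M W) (J : Set B) (i : B) (v y w : W) (τ : W ⧸ WJ cs J)
    (hv : BruhatLT cs v (cs.simple i * v))
    (hττ : CosetLE cs J (cs.simple i • τ) τ)
    (hy : (BruhatLE cs (cs.simple i * v) y ∧ (QuotientGroup.mk y : W ⧸ WJ cs J) = τ) ∧
      ∀ x : W, BruhatLE cs (cs.simple i * v) x →
        (QuotientGroup.mk x : W ⧸ WJ cs J) = τ → BruhatLE cs y x)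
    (hw : (BruhatLE cs v w ∧ (QuotientGroup.mk w : W ⧸ WJ cs J) = τ) ∧
      ∀ x : W, BruhatLE cs v x → (QuotientGroup.mk x : W ⧸ WJ cs J) = τ →
        BruhatLE cs w x) :
    y = w ∨ (y = cs.simple i * w ∧ BruhatLT cs w (cs.simple i * w) ∧
      cs.simple i • τ = τ) := by
  obtain ⟨⟨hsvy, hyτ⟩, hymin⟩ := hy
  obtain ⟨⟨hvw, hwτ⟩, hwmin⟩ := hw
  have hvsv : cs.length v < cs.length (cs.simple i * v) := hv.1.length_lt hv.2
  have hwy : BruhatLE cs w y := hwmin y (hv.1.trans hsvy) hyτ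
  by_cases hsvw : BruhatLE cs (cs.simple i * v) w
  · exact .inl ((hymin w hsvw hwτ).eq_of_length_le hwy.length_le)
  right
  have hwsw : cs.length w < cs.length (cs.simple i * w) := by
    by_contra h
    have hdesc := lt_of_le_of_ne (not_lt.mp h) (cs.length_simple_mul_ne w i)
    exact hsvw ((hvw.lifting hvsv).1 hdesc).1
  have hsτ : cs.simple i • τ = τ := smul_eq_of_cosetLE hττ hwτ hwsw
  have hysw : BruhatLE cs y (cs.simple i * w) :=
    hymin _ ((hvw.lifting hvsv).2 hwsw) (by rw [← hsτ, ← hwτ]; rfl)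
  have hwy' : cs.length w < cs.length y := hwy.length_lt fun h ↦ hsvw (h ▸ hsvy)
  have hyeq : y = cs.simple i * w :=
    hysw.eq_of_length_le (by have := cs.length_simple_mul w i; omega)
  exact ⟨hyeq, ⟨bruhatLE_simple_mul hwsw, fun h ↦ hwsw.ne (congrArg cs.length h)⟩, hsτ⟩

/-- suppose `v < sv`, `svW_J ≤ τ`, and `sτ ≤ τ`. Let `y = up(sv, τ)`
and `w = up(v, τ)`. Then `y = w`, or `y = sw > w`; the latter only if `sτ = τ`. -/
theorem lift_right {B W : Type*} [Group W] {M : CoxeterMatrix B}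
    (cs : CoxeterSystem M W) (J : Set B) (i : B) (v y w : W) (τ : W ⧸ WJ cs J)
    (hv : BruhatLT cs v (cs.simple i * v))
    (hvτ : CosetLE cs J (QuotientGroup.mk (cs.simple i * v)) τ)
    (hττ : CosetLE cs J (cs.simple i • τ) τ)
    (hy : (BruhatLE cs (cs.simple i * v) y ∧ (QuotientGroup.mk y : W ⧸ WJ cs J) = τ) ∧
      ∀ x : W, BruhatLE cs (cs.simple i * v) x →
        (QuotientGroup.mk x : W ⧸ WJ cs J) = τ → BruhatLE cs y x)
    (hw : (BruhatLE cs v w ∧ (QuotientGroup.mk w : W ⧸ WJ cs J) = τ) ∧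
      ∀ x : W, BruhatLE cs v x → (QuotientGroup.mk x : W ⧸ WJ cs J) = τ →
        BruhatLE cs w x) :
    y = w ∨ (y = cs.simple i * w ∧ BruhatLT cs w (cs.simple i * w) ∧
      cs.simple i • τ = τ) :=
  lift_right_general cs J i v y w τ hv hττ hy hw

end KMChev
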